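/- Let h(t) = −t log₂ t − (1−t) log₂(1−t) and h₀(t) = h((1 − √(1−4t))/2) for t ∈ [0,1/4]. Then for every α ∈ (0,1), max_{k∈{0,1,2}} sup_{t∈(0,1/4]} |h₀^{(k)}(t)| t^{k−α} < ∞; in particular h₀ satisfies Condition 1 (with f = h₀) for every α ∈ (0,1). -/

import Mathlib

open MeasureTheory Filter Topology
open scoped ENNReal

noncomputable section

/-- The lattice `ℤ^d`. -/
abbrev Zd (d : ℕ) := Fin d → ℤ

/-- The Hilbert space `ℓ²(ℤ^d)`. -/
abbrev Hd (d : ℕ) := lp (fun _ : Zd d => ℂ) 2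

variable {d : ℕ}

/-- The max (sup) norm `‖x‖ = max_i |x_i|` on `ℤ^d`, as a natural number. -/
def natNorm (x : Zd d) : ℕ := Finset.univ.sup fun i => (x i).natAbs

/-- Distance between two subsets of `ℤ^d` (`0` by convention if one of them is empty). -/
def setDist (C₁ C₂ : Set (Zd d)) : ℕ :=
  sInf {n | ∃ x ∈ C₁, ∃ y ∈ C₂, natNorm (x - y) = n}

/-- Boundary `∂C = {x ∈ C : dist({x}, Cᶜ) = 1}`. -/
def bdry (C : Set (Zd d)) : Set (Zd d) := {x ∈ C | setDist {x} Cᶜ = 1}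

/-- The standard basis vector `δ_x` of `ℓ²(ℤ^d)`. -/
def delta (x : Zd d) : Hd d := lp.single 2 x (1 : ℂ)

/-- Matrix element `A(x,y) = ⟨δ_x, A δ_y⟩`. -/
def matElem (A : Hd d →L[ℂ] Hd d) (x y : Zd d) : ℂ :=
  @inner ℂ _ _ (delta x) (A (delta y))

lemma indicator_norm_le (C : Set (Zd d)) (f : Hd d) (i : Zd d) :
    ‖C.indicator ⇑f i‖ ≤ ‖(f : ∀ _ : Zd d, ℂ) i‖ := by
  by_cases hi : i ∈ C
  · simp [Set.indicator_of_mem hi]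
  · simp [Set.indicator_of_notMem hi]

lemma memℓp_indicator (C : Set (Zd d)) (f : Hd d) : Memℓp (C.indicator ⇑f) 2 := by
  refine memℓp_gen ?_
  have hf : Summable fun i => ‖(f : ∀ _ : Zd d, ℂ) i‖ ^ (2 : ℝ≥0∞).toReal :=
    (memℓp_gen_iff (by norm_num)).mp (lp.memℓp f)
  refine hf.of_nonneg_of_le (fun i => by positivity) fun i =>
    Real.rpow_le_rpow (norm_nonneg _) (indicator_norm_le C f i) (by norm_num)

/-- The multiplication operator by the indicator of `C ⊆ ℤ^d` (orthogonal projection onto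
`ℓ²(C)`). -/
def chi (C : Set (Zd d)) : Hd d →L[ℂ] Hd d :=
  LinearMap.mkContinuous
    { toFun := fun f => (⟨C.indicator ⇑f, memℓp_indicator C f⟩ : Hd d)
      map_add' := by
        intro f g
        refine lp.ext (funext fun x => ?_)
        change C.indicator (⇑(f + g)) x = C.indicator ⇑f x + C.indicator ⇑g x
        rw [lp.coeFn_add]
        by_cases hx : x ∈ C <;>
          simp [Set.indicator_of_mem, Set.indicator_of_notMem, hx]
      map_smul' := by
        intro c f
        refine lp.ext (funext fun x => ?_)
        change C.indicator (⇑(c • f)) x = c • C.indicator ⇑f x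
        rw [lp.coeFn_smul]
        by_cases hx : x ∈ C <;>
          simp [Set.indicator_of_mem, Set.indicator_of_notMem, hx] }
    1 (by
      intro f
      rw [one_mul]
      show ‖(⟨C.indicator ⇑f, memℓp_indicator C f⟩ : Hd d)‖ ≤ ‖f‖
      by_contra hcon
      push_neg at hcon
      have h2 : (0:ℝ) < (2 : ℝ≥0∞).toReal := by norm_num
      have hlt : ‖f‖ ^ (2 : ℝ≥0∞).toReal
          < ‖(⟨C.indicator ⇑f, memℓp_indicator C f⟩ : Hd d)‖ ^ (2 : ℝ≥0∞).toReal :=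
        Real.rpow_lt_rpow (norm_nonneg _) hcon h2
      have hle : ‖(⟨C.indicator ⇑f, memℓp_indicator C f⟩ : Hd d)‖ ^ (2 : ℝ≥0∞).toReal
          ≤ ‖f‖ ^ (2 : ℝ≥0∞).toReal := by
        rw [lp.norm_rpow_eq_tsum h2, lp.norm_rpow_eq_tsum h2 f]
        exact Summable.tsum_le_tsum
          (fun i => Real.rpow_le_rpow (norm_nonneg _) (indicator_norm_le C f i) h2.le)
          ((memℓp_gen_iff h2).mp (lp.memℓp _)) ((memℓp_gen_iff h2).mp (lp.memℓp f))
      exact absurd hle (not_le.mpr hlt))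

/-- `Π_{C₁,C₂} = χ_{C₁} P χ_{C₂} P χ_{C₁}`. -/
def PiOp (P : Hd d →L[ℂ] Hd d) (C₁ C₂ : Set (Zd d)) : Hd d →L[ℂ] Hd d :=
  chi C₁ ∘L P ∘L chi C₂ ∘L P ∘L chi C₁

/-- `Π_C = Π_{C,Cᶜ}`. -/
def PiC (P : Hd d →L[ℂ] Hd d) (C : Set (Zd d)) : Hd d →L[ℂ] Hd d := PiOp P C Cᶜ

/-- `A` is an orthogonal projection. -/
def IsOrthoProj (P : Hd d →L[ℂ] Hd d) : Prop := IsSelfAdjoint P ∧ P ∘L P = P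

/-- Trace of (the restriction to `ℓ²(C)` of) `A` over a subset `C ⊆ ℤ^d`:
`Σ_{x∈C} Re A(x,x)`. -/
def trSet (C : Set (Zd d)) (A : Hd d →L[ℂ] Hd d) : ℝ :=
  ∑' x : C, (matElem A x x).re

/-- `[0,∞]`-valued trace over a subset `C ⊆ ℤ^d`. -/
def trSetNN (C : Set (Zd d)) (A : Hd d →L[ℂ] Hd d) : ℝ≥0∞ :=
  ∑' x : C, ENNReal.ofReal (matElem A x x).re

/-- The cube `Λ_M = ([−M,M] ∩ ℤ)^d`. -/
def cube (d M : ℕ) : Set (Zd d) := {x | ∀ i, |x i| ≤ (M : ℤ)}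

/-- Condition 1 on the test function `f`, with exponent `α`. -/
def Condition1 (f : ℝ → ℝ) (α : ℝ) : Prop :=
  (0 < α ∧ α ≤ 1) ∧
  (∀ x : ℝ, x ∉ Set.Icc (0:ℝ) (1/4) → f x = 0) ∧
  ContDiffOn ℝ 2 f (Set.Ioc 0 (1/4)) ∧
  ∃ Cf : ℝ, ∀ k : ℕ, k ≤ 2 → ∀ x ∈ Set.Ioc (0:ℝ) (1/4),
    |iteratedDerivWithin k f (Set.Ioc 0 (1/4)) x| * x ^ ((k : ℝ) - α) ≤ Cf

/-- A measure preserving ergodic action of `ℤ^d` on a probability space. -/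
structure ErgAction (d : ℕ) {Ω : Type*} [MeasurableSpace Ω] (μ : Measure Ω)
    (T : Zd d → Ω → Ω) : Prop where
  measPres : ∀ a, MeasurePreserving (T a) μ μ
  base : T 0 = id
  add : ∀ a b, T (a + b) = T a ∘ T b
  ergodic : ∀ s : Set Ω, MeasurableSet s → (∀ a, T a ⁻¹' s = s) → μ s = 0 ∨ μ s = 1

/-- Assumption 1: `P(ω)` is an ergodic family of orthogonal projections with exponentially
decaying expected matrix elements. -/
structure Assumption1 (d : ℕ) {Ω : Type*} [MeasurableSpace Ω] (μ : Measure Ω)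
    (T : Zd d → Ω → Ω) (P : Ω → Hd d →L[ℂ] Hd d) (C₀ γ : ℝ) : Prop where
  act : ErgAction d μ T
  proj : ∀ᵐ ω ∂μ, IsOrthoProj (P ω)
  meas : ∀ x y, Measurable fun ω => matElem (P ω) x y
  covariant : ∀ a : Zd d, ∀ᵐ ω ∂μ, ∀ x y,
    matElem (P (T a ω)) x y = matElem (P ω) (x + a) (y + a)
  γpos : 0 < γ
  decay : ∀ x y, ∫ ω, ‖matElem (P ω) x y‖ ∂μ
    ≤ C₀ * Real.exp (-γ * natNorm (x - y))


/-- The half-space `ℤ^d_+ = ([0,∞) ∩ ℤ) × ℤ^{d-1}` (first coordinate nonnegative). -/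
def Zplus (d : ℕ) : Set (Zd d) := {x | ∀ i : Fin d, (i : ℕ) = 0 → 0 ≤ x i}

/-- The half-line `ℤ₋ = (−∞,0] ∩ ℤ`, inside `ℤ¹`. -/
def Zminus1 : Set (Zd 1) := {x | x 0 ≤ 0}

/-- The lattice point `j·e₁ ∈ ℤ^d`. -/
def axisPt (d : ℕ) (j : ℕ) : Zd d := fun i => if (i : ℕ) = 0 then (j : ℤ) else 0

/-- The face `F_M^{(i,s)}` of the cube `Λ_M` (`s = true` for the `+` face). -/
def face (d M : ℕ) (i : Fin d) (s : Bool) : Set (Zd d) :=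
  {x ∈ cube d M | x i = if s then (M : ℤ) else -(M : ℤ)}

/-- The truncated face `F̂_M^{(i,s)}` (points at distance `≥ 3ℓ` from all other faces). -/
def faceHat (d M ℓ : ℕ) (i : Fin d) (s : Bool) : Set (Zd d) :=
  {x ∈ face d M i s | ∀ j t, (j, t) ≠ (i, s) → 3 * ℓ ≤ setDist {x} (face d M j t)}

/-- The surface layer `B_M^{(i,s)}`, the `ℓ`-neighborhood of `F̂_M^{(i,s)}` inside `Λ_M`. -/
def layer (d M ℓ : ℕ) (i : Fin d) (s : Bool) : Set (Zd d) :=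
  {x ∈ cube d M | setDist {x} (faceHat d M ℓ i s) < ℓ}

/-- The lattice half-space `ℤ^d_{+,(i,s)}` containing `Λ_M` with `F_M^{(i,s)}` on its boundary. -/
def halfSp (d M : ℕ) (i : Fin d) (s : Bool) : Set (Zd d) :=
  {x | if s then x i ≤ (M : ℤ) else -(M : ℤ) ≤ x i}

/-- The error term `R_d(M) = (M^d e^{−αγℓ/2} + (d−1) ℓ² M^{d−2})²`. -/
def RdErr (d M ℓ : ℕ) (α γ : ℝ) : ℝ :=
  ((M : ℝ) ^ d * Real.exp (-(α * γ * ℓ) / 2)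
    + ((d : ℝ) - 1) * (ℓ : ℝ) ^ 2 * (M : ℝ) ^ (d - 2)) ^ 2

/-!
With `v = 1 - 4t` and `u = √v`, the point `s = (1 - u)/2` solves `s (1 - s) = t`, and the
expansion `log (1 + u) - log (1 - u) = 2 ∑ u^(2n+1)/(2n+1)` turns `h₀(t) = h(s)` into
`h₀(t) log 2 = -(log t)/2 - v p(v)` with `p(v) = ∑ vⁿ/(2n+1)`. As `p` is a power series of
radius `1`, this closed form is smooth on `(0, 1/2)`, so the endpoint `t = 1/4` (where `√(1 - 4t)`
is singular) causes no trouble. Termwise, `p + 2 v p' = 1/(1 - v)`, whence `h₀' = 2 p(v)/log 2`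
and `h₀'' = -8 p'(v)/log 2`. The bounds `1 ≤ p(v) ≤ 1 - log (1 - v)` and
`0 ≤ p'(v) ≤ 1/(2(1 - v))` on `[0, 1)`, together with `|log x| x^(1-α) < 1/(1-α)` on `(0, 1]`,
give the weighted estimates.
-/

open Real Set

/-- For `0 < v < 1` this is `artanh √v / √v`. -/
def artanhSeries (v : ℝ) : ℝ := ∑' n : ℕ, v ^ n / (2 * n + 1)

lemma hasSum_artanhSeries {v : ℝ} (hv : |v| < 1) :
    HasSum (fun n : ℕ => v ^ n / (2 * n + 1)) (artanhSeries v) := by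
  refine (Summable.of_norm_bounded (summable_geometric_of_lt_one (abs_nonneg v) hv)
    fun n => ?_).hasSum
  rw [norm_div, norm_pow, Real.norm_eq_abs, Real.norm_of_nonneg (by positivity)]
  exact div_le_self (by positivity) (by linarith [(n.cast_nonneg : (0 : ℝ) ≤ n)])

lemma contDiffOn_artanhSeries {n : WithTop ℕ∞} :
    ContDiffOn ℝ n artanhSeries (Ioo (-1) 1) := by
  set c : ℕ → ℝ := fun n => (2 * n + 1 : ℝ)⁻¹
  set P := FormalMultilinearSeries.ofScalars ℝ c
  have hc : ∀ n, ‖c n‖ ≤ 1 := fun n => by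
    rw [Real.norm_of_nonneg (by positivity)]
    exact inv_le_one_of_one_le₀ (by linarith [(n.cast_nonneg : (0 : ℝ) ≤ n)])
  have hrad : 1 ≤ P.radius := by
    refine ENNReal.le_of_forall_nnreal_lt fun r hr => P.le_radius_of_bound 1 fun n => ?_
    rw [FormalMultilinearSeries.ofScalars_norm]
    have hr₁ : (r : ℝ) < 1 := by exact_mod_cast hr
    exact mul_le_one₀ (hc n) (by positivity) (pow_le_one₀ r.2 hr₁.le)
  have hP := (P.hasFPowerSeriesOnBall (zero_lt_one.trans_le hrad)).analyticOnNhd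
  have hsum : P.sum = artanhSeries := by
    funext v
    rw [← FormalMultilinearSeries.ofScalarsSum, FormalMultilinearSeries.ofScalarsSum_eq_tsum]
    simp [c, artanhSeries, div_eq_inv_mul]
  rw [← hsum]
  refine (hP.mono fun v hv => Metric.eball_subset_eball hrad ?_).contDiffOn (uniqueDiffOn_Ioo _ _)
  rw [Metric.mem_eball, edist_zero_right, ← ofReal_norm, Real.norm_eq_abs]
  exact ENNReal.ofReal_lt_one.2 (abs_lt.2 hv)

lemma hasDerivAt_artanhSeries {v : ℝ} (hv : |v| < 1) :
    HasDerivAt artanhSeries (deriv artanhSeries v) v :=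
  ((contDiffOn_artanhSeries (n := 1)).differentiableOn one_ne_zero v (abs_lt.1 hv)
    |>.differentiableAt (Ioo_mem_nhds (abs_lt.1 hv).1 (abs_lt.1 hv).2)).hasDerivAt

lemma hasSum_deriv_artanhSeries {v : ℝ} (hv : |v| < 1) :
    HasSum (fun n : ℕ => n * v ^ (n - 1) / (2 * n + 1)) (deriv artanhSeries v) := by
  obtain ⟨r, hvr, hr₁⟩ := exists_between hv
  have hr₀ : 0 < r := (abs_nonneg v).trans_lt hvr
  have hbound : ∀ n : ℕ, ∀ y ∈ Ioo (-r) r,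
      ‖n * y ^ (n - 1) / (2 * n + 1)‖ ≤ n * r ^ (n - 1) := by
    intro n y hy
    rw [norm_div, norm_mul, norm_pow, Real.norm_natCast, Real.norm_eq_abs,
      Real.norm_of_nonneg (by positivity)]
    calc n * |y| ^ (n - 1) / (2 * n + 1) ≤ n * |y| ^ (n - 1) :=
          div_le_self (by positivity) (by linarith [(n.cast_nonneg : (0 : ℝ) ≤ n)])
      _ ≤ n * r ^ (n - 1) := by gcongr; exact (abs_lt.2 hy).le
  have hsumm : Summable fun n : ℕ => (n : ℝ) * r ^ (n - 1) := by
    refine ((summable_pow_mul_geometric_of_norm_lt_one (R := ℝ) 1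
      (by rwa [Real.norm_of_nonneg hr₀.le])).div_const r).congr fun n => ?_
    rcases n with _ | n
    · simp
    · rw [pow_one, Nat.add_sub_cancel, pow_succ, ← mul_assoc, mul_div_cancel_right₀ _ hr₀.ne']
  have hv' : v ∈ Ioo (-r) r := abs_lt.1 hvr
  have hderiv : HasDerivAt artanhSeries (∑' n : ℕ, n * v ^ (n - 1) / (2 * n + 1)) v :=
    hasDerivAt_tsum_of_isPreconnected (g := fun (n : ℕ) (y : ℝ) => y ^ n / (2 * n + 1))
      (g' := fun (n : ℕ) (y : ℝ) => n * y ^ (n - 1) / (2 * n + 1)) hsumm isOpen_Ioo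
      isPreconnected_Ioo (fun n y _ => (hasDerivAt_pow n y).div_const (2 * n + 1 : ℝ))
      hbound (y₀ := 0) (by simp [hr₀]) (hasSum_artanhSeries (by simp)).summable hv'
  rw [hderiv.deriv]
  exact (Summable.of_norm_bounded hsumm fun n => hbound n v hv').hasSum

lemma artanhSeries_add_two_mul_deriv {v : ℝ} (hv : |v| < 1) :
    artanhSeries v + 2 * v * deriv artanhSeries v = (1 - v)⁻¹ := by
  refine ((hasSum_artanhSeries hv).add
    ((hasSum_deriv_artanhSeries hv).mul_left (2 * v))).unique ?_
  convert hasSum_geometric_of_abs_lt_one hv using 2 with n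
  rcases n with _ | n
  · simp
  · push_cast
    rw [pow_succ]
    field_simp
    ring

lemma one_le_artanhSeries {v : ℝ} (hv₀ : 0 ≤ v) (hv₁ : v < 1) : 1 ≤ artanhSeries v := by
  simpa using le_hasSum (hasSum_artanhSeries (abs_lt.2 ⟨by linarith, hv₁⟩)) 0
    fun n _ => by positivity

lemma artanhSeries_le_one_sub_log {v : ℝ} (hv₀ : 0 ≤ v) (hv₁ : v < 1) :
    artanhSeries v ≤ 1 - log (1 - v) := by
  have hv : |v| < 1 := abs_lt.2 ⟨by linarith, hv₁⟩
  have htail := (hasSum_nat_add_iff' 1).mpr (hasSum_artanhSeries hv)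
  have hle := hasSum_le (fun n => ?_) htail (hasSum_pow_div_log_of_abs_lt_one hv)
  · rw [Finset.sum_range_one, show v ^ 0 / (2 * ((0 : ℕ) : ℝ) + 1) = 1 by norm_num] at hle
    linarith
  · push_cast
    gcongr
    linarith

lemma deriv_artanhSeries_nonneg {v : ℝ} (hv₀ : 0 ≤ v) (hv₁ : v < 1) :
    0 ≤ deriv artanhSeries v :=
  (hasSum_deriv_artanhSeries (abs_lt.2 ⟨by linarith, hv₁⟩)).nonneg fun n => by positivity

lemma deriv_artanhSeries_le {v : ℝ} (hv₀ : 0 ≤ v) (hv₁ : v < 1) :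
    deriv artanhSeries v ≤ (2 * (1 - v))⁻¹ := by
  have hv : |v| < 1 := abs_lt.2 ⟨by linarith, hv₁⟩
  have htail := (hasSum_nat_add_iff' 1).mpr (hasSum_deriv_artanhSeries hv)
  have hle := hasSum_le (fun n => ?_) htail ((hasSum_geometric_of_abs_lt_one hv).div_const 2)
  · simp only [Finset.sum_range_one, Nat.cast_zero, zero_mul, zero_div, sub_zero] at hle
    rw [mul_inv]
    linarith
  · push_cast
    rw [div_le_div_iff₀ (by positivity) two_pos]
    nlinarith [pow_nonneg hv₀ n]

lemma mul_log_sub_log_eq_artanhSeries {u : ℝ} (hu : |u| < 1) :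
    u * (log (1 + u) - log (1 - u)) = 2 * u ^ 2 * artanhSeries (u ^ 2) := by
  have hu₂ : |u ^ 2| < 1 := by
    rw [abs_pow]
    exact pow_lt_one₀ (abs_nonneg u) hu two_ne_zero
  refine ((hasSum_log_sub_log_of_abs_lt_one hu).mul_left u).unique ?_
  convert (hasSum_artanhSeries hu₂).mul_left (2 * u ^ 2) using 2 with k
  rw [← pow_mul]
  ring

lemma binEntropy_le_rpow {s α : ℝ} (hs₀ : 0 < s) (hs₁ : s < 1) (hα : α < 1) :
    binEntropy s ≤ (1 + (1 - α)⁻¹) * s ^ α := by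
  rw [binEntropy_eq_negMulLog_add_negMulLog_one_sub, negMulLog, negMulLog]
  have hlog : -(log s * s ^ (1 - α)) ≤ (1 - α)⁻¹ := by
    simpa using neg_le.1
      (abs_lt.1 (abs_log_mul_self_rpow_lt s (1 - α) hs₀ hs₁.le (by linarith))).1.le
  have hsplit : s ^ α * s ^ (1 - α) = s := by
    rw [← rpow_add hs₀, add_sub_cancel, rpow_one]
  have h₁ : -s * log s ≤ s ^ α * (1 - α)⁻¹ := by
    calc -s * log s = s ^ α * -(log s * s ^ (1 - α)) := by linear_combination log s * hsplit
      _ ≤ s ^ α * (1 - α)⁻¹ := by gcongr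
  have h₂ : -(1 - s) * log (1 - s) ≤ s := by
    have := one_sub_inv_le_log_of_pos (by linarith : 0 < 1 - s)
    have h1s : (1 - s) * (1 - s)⁻¹ = 1 := mul_inv_cancel₀ (by linarith)
    nlinarith
  have h₃ : s ≤ s ^ α := self_le_rpow_of_le_one hs₀.le hs₁.le hα.le
  linarith

/-- The smaller root of `s * (1 - s) = t`. -/
def smallRoot (t : ℝ) : ℝ := (1 - √(1 - 4 * t)) / 2

lemma smallRoot_pos {t : ℝ} (ht : 0 < t) : 0 < smallRoot t := by
  have : √(1 - 4 * t) < 1 := by rw [sqrt_lt' one_pos]; linarith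
  rw [smallRoot]; linarith

lemma smallRoot_le_half (t : ℝ) : smallRoot t ≤ 1 / 2 := by
  have := sqrt_nonneg (1 - 4 * t)
  rw [smallRoot]; linarith

lemma smallRoot_le_two_mul {t : ℝ} (ht₀ : 0 ≤ t) (ht : t ≤ 1 / 4) : smallRoot t ≤ 2 * t := by
  have hu := sq_sqrt (by linarith : 0 ≤ 1 - 4 * t)
  have hu₀ := sqrt_nonneg (1 - 4 * t)
  have hu₁ : √(1 - 4 * t) ≤ 1 := sqrt_le_one.2 (by linarith)
  rw [smallRoot]; nlinarith

def entropyOfRoot (t : ℝ) : ℝ :=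
  (-log t / 2 - (1 - 4 * t) * artanhSeries (1 - 4 * t)) / log 2

lemma entropyOfRoot_eq {t : ℝ} (ht : t ∈ Ioc 0 (1 / 4)) :
    entropyOfRoot t = binEntropy (smallRoot t) / log 2 := by
  set u := √(1 - 4 * t) with hu_def
  have hu₀ : 0 ≤ u := sqrt_nonneg _
  have hu₁ : u < 1 := by rw [hu_def, sqrt_lt' one_pos]; linarith [ht.1]
  have hu₂ : u ^ 2 = 1 - 4 * t := sq_sqrt (by linarith [ht.2])
  have hlog_s : log (smallRoot t) = log (1 - u) - log 2 :=
    log_div (by linarith) two_ne_zero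
  have hlog_one_sub_s : log (1 - smallRoot t) = log (1 + u) - log 2 := by
    rw [show 1 - smallRoot t = (1 + u) / 2 by rw [smallRoot]; ring]
    exact log_div (by linarith) two_ne_zero
  have hlog_t : log (1 - u) + log (1 + u) = 2 * log 2 + log t := by
    rw [← log_mul (by linarith) (by linarith), ← log_rpow two_pos,
      ← log_mul (by positivity) ht.1.ne']
    congr 1
    norm_num
    nlinarith
  have hseries := mul_log_sub_log_eq_artanhSeries (abs_lt.2 ⟨by linarith, hu₁⟩)
  rw [hu₂] at hseries
  rw [entropyOfRoot, binEntropy_eq_negMulLog_add_negMulLog_one_sub, negMulLog, negMulLog,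
    hlog_s, hlog_one_sub_s, smallRoot, ← hu_def]
  congr 1
  linear_combination (1 / 2) * hlog_t + (1 / 2) * hseries

lemma abs_one_sub_four_mul_lt_one {t : ℝ} (ht : t ∈ Ioo 0 (1 / 2)) : |1 - 4 * t| < 1 :=
  abs_lt.2 ⟨by linarith [ht.2], by linarith [ht.1]⟩

lemma hasDerivAt_one_sub_four_mul (t : ℝ) : HasDerivAt (fun t : ℝ => 1 - 4 * t) (-4) t := by
  simpa using ((hasDerivAt_id t).const_mul 4).const_sub 1

lemma contDiffOn_entropyOfRoot {n : WithTop ℕ∞} :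
    ContDiffOn ℝ n entropyOfRoot (Ioo 0 (1 / 2)) := by
  have hlog : ContDiffOn ℝ n log (Ioo 0 (1 / 2)) :=
    contDiffOn_log.mono fun t ht => ht.1.ne'
  have hp : ContDiffOn ℝ n (fun t => artanhSeries (1 - 4 * t)) (Ioo 0 (1 / 2)) :=
    contDiffOn_artanhSeries.comp (by fun_prop)
      fun t ht => abs_lt.1 (abs_one_sub_four_mul_lt_one ht)
  exact ((hlog.neg.div_const _).sub
    ((contDiffOn_const.sub (contDiffOn_const.mul contDiffOn_id)).mul hp)).div_const _

lemma hasDerivAt_entropyOfRoot {t : ℝ} (ht : t ∈ Ioo 0 (1 / 2)) :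
    HasDerivAt entropyOfRoot (2 * artanhSeries (1 - 4 * t) / log 2) t := by
  have hv := abs_one_sub_four_mul_lt_one ht
  have hp := (hasDerivAt_artanhSeries hv).comp t (hasDerivAt_one_sub_four_mul t)
  have h : HasDerivAt entropyOfRoot ((-t⁻¹ / 2 - (-4 * artanhSeries (1 - 4 * t)
      + (1 - 4 * t) * (deriv artanhSeries (1 - 4 * t) * -4))) / log 2) t :=
    (((hasDerivAt_log ht.1.ne').neg.div_const 2).sub
      ((hasDerivAt_one_sub_four_mul t).mul hp)).div_const (log 2)
  refine h.congr_deriv ?_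
  have hid := artanhSeries_add_two_mul_deriv hv
  rw [show 1 - (1 - 4 * t) = 4 * t by ring] at hid
  have ht₀ := ht.1.ne'
  field_simp at hid ⊢
  linear_combination hid

lemma hasDerivAt_deriv_entropyOfRoot {t : ℝ} (ht : t ∈ Ioo 0 (1 / 2)) :
    HasDerivAt (deriv entropyOfRoot) (-8 * deriv artanhSeries (1 - 4 * t) / log 2) t := by
  have heq : deriv entropyOfRoot =ᶠ[𝓝 t] fun t => 2 * artanhSeries (1 - 4 * t) / log 2 :=
    eventually_of_mem (Ioo_mem_nhds ht.1 ht.2) fun x hx => (hasDerivAt_entropyOfRoot hx).deriv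
  refine ((((hasDerivAt_artanhSeries (abs_one_sub_four_mul_lt_one ht)).comp t
    (hasDerivAt_one_sub_four_mul t)).const_mul 2).div_const _).congr_of_eventuallyEq heq
    |>.congr_deriv ?_
  ring

lemma iteratedDeriv_one_entropyOfRoot {t : ℝ} (ht : t ∈ Ioo 0 (1 / 2)) :
    iteratedDeriv 1 entropyOfRoot t = 2 * artanhSeries (1 - 4 * t) / log 2 := by
  rw [iteratedDeriv_one]
  exact (hasDerivAt_entropyOfRoot ht).deriv

lemma iteratedDeriv_two_entropyOfRoot {t : ℝ} (ht : t ∈ Ioo 0 (1 / 2)) :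
    iteratedDeriv 2 entropyOfRoot t = -8 * deriv artanhSeries (1 - 4 * t) / log 2 := by
  rw [iteratedDeriv_succ, iteratedDeriv_one]
  exact (hasDerivAt_deriv_entropyOfRoot ht).deriv

lemma iteratedDerivWithin_eq_iteratedDeriv_entropyOfRoot {f : ℝ → ℝ}
    (hf : EqOn f entropyOfRoot (Ioc 0 (1 / 4))) (k : ℕ) {t : ℝ} (ht : t ∈ Ioc 0 (1 / 4)) :
    iteratedDerivWithin k f (Ioc 0 (1 / 4)) t = iteratedDeriv k entropyOfRoot t := by
  rw [iteratedDerivWithin_congr hf ht, iteratedDerivWithin_eq_iteratedDeriv (uniqueDiffOn_Ioc _ _)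
    (contDiffOn_entropyOfRoot.contDiffAt (Ioo_mem_nhds ht.1 (by linarith [ht.2]))) ht]

section Bounds

variable {α t : ℝ}

lemma abs_entropyOfRoot_mul_rpow_le (hα : α ∈ Ioo 0 1) (ht : t ∈ Ioc 0 (1 / 4)) :
    |entropyOfRoot t| * t ^ (-α) ≤ 2 * (1 + (1 - α)⁻¹) / log 2 := by
  have hs₀ := smallRoot_pos ht.1
  have hs₁ : smallRoot t < 1 := (smallRoot_le_half t).trans_lt (by norm_num)
  have hsα : smallRoot t ^ α ≤ 2 * t ^ α := calc
    smallRoot t ^ α ≤ (2 * t) ^ α :=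
      rpow_le_rpow hs₀.le (smallRoot_le_two_mul ht.1.le ht.2) hα.1.le
    _ = 2 ^ α * t ^ α := mul_rpow zero_le_two ht.1.le
    _ ≤ 2 ^ (1 : ℝ) * t ^ α := mul_le_mul_of_nonneg_right
      (rpow_le_rpow_of_exponent_le one_le_two hα.2.le) (rpow_nonneg ht.1.le α)
    _ = 2 * t ^ α := by rw [rpow_one]
  have hlog2 := log_pos one_lt_two
  rw [entropyOfRoot_eq ht, abs_of_nonneg (div_nonneg (binEntropy_nonneg hs₀.le hs₁.le) hlog2.le)]
  have hE := (binEntropy_le_rpow hs₀ hs₁ hα.2).trans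
    (mul_le_mul_of_nonneg_left hsα (by have := inv_pos.2 (sub_pos.2 hα.2); positivity))
  calc _ ≤ (1 + (1 - α)⁻¹) * (2 * t ^ α) / log 2 * t ^ (-α) := by
        gcongr
        exact rpow_nonneg ht.1.le _
    _ = 2 * (1 + (1 - α)⁻¹) / log 2 := by
        rw [rpow_neg ht.1.le]
        field_simp [(rpow_pos_of_pos ht.1 α).ne']

lemma abs_iteratedDeriv_one_entropyOfRoot_mul_rpow_le (hα : α ∈ Ioo 0 1)
    (ht : t ∈ Ioc 0 (1 / 4)) :
    |iteratedDeriv 1 entropyOfRoot t| * t ^ (1 - α) ≤ 2 * (1 + (1 - α)⁻¹) / log 2 := by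
  have hv₀ : 0 ≤ 1 - 4 * t := by linarith [ht.2]
  have hv₁ : 1 - 4 * t < 1 := by linarith [ht.1]
  have hp := artanhSeries_le_one_sub_log hv₀ hv₁
  rw [show 1 - (1 - 4 * t) = 4 * t by ring] at hp
  have hlog2 := log_pos one_lt_two
  have h4t₀ : 0 < 4 * t := by linarith [ht.1]
  have h4t₁ : 4 * t ≤ 1 := by linarith [ht.2]
  have hlog : -log (4 * t) * (4 * t) ^ (1 - α) ≤ (1 - α)⁻¹ := by
    simpa using neg_le.1 (abs_lt.1 (abs_log_mul_self_rpow_lt _ (1 - α) h4t₀ h4t₁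
      (by linarith [hα.2]))).1.le
  have hpow₁ : t ^ (1 - α) ≤ 1 := rpow_le_one ht.1.le (by linarith [ht.2]) (by linarith [hα.2])
  have hpow₄ : t ^ (1 - α) ≤ (4 * t) ^ (1 - α) :=
    rpow_le_rpow ht.1.le (by linarith [ht.1]) (by linarith [hα.2])
  have hneglog : 0 ≤ -log (4 * t) := neg_nonneg.2 (log_nonpos h4t₀.le h4t₁)
  rw [iteratedDeriv_one_entropyOfRoot ⟨ht.1, by linarith [ht.2]⟩,
    abs_of_nonneg (by have := one_le_artanhSeries hv₀ hv₁; positivity)]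
  calc _ ≤ 2 * (1 - log (4 * t)) / log 2 * t ^ (1 - α) := by
        gcongr
        exact rpow_nonneg ht.1.le _
    _ = 2 * (t ^ (1 - α) + -log (4 * t) * t ^ (1 - α)) / log 2 := by ring
    _ ≤ 2 * (1 + (1 - α)⁻¹) / log 2 := by
        gcongr 2 * ?_ / _
        exact add_le_add hpow₁ ((mul_le_mul_of_nonneg_left hpow₄ hneglog).trans hlog)

lemma abs_iteratedDeriv_two_entropyOfRoot_mul_rpow_le (hα : α ∈ Ioo 0 1)
    (ht : t ∈ Ioc 0 (1 / 4)) :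
    |iteratedDeriv 2 entropyOfRoot t| * t ^ (2 - α) ≤ 2 * (1 + (1 - α)⁻¹) / log 2 := by
  have hv₀ : 0 ≤ 1 - 4 * t := by linarith [ht.2]
  have hv₁ : 1 - 4 * t < 1 := by linarith [ht.1]
  have hlog2 := log_pos one_lt_two
  have hpow₁ : t ^ (1 - α) ≤ 1 := rpow_le_one ht.1.le (by linarith [ht.2]) (by linarith [hα.2])
  have hsplit : t ^ (2 - α) = t * t ^ (1 - α) := by
    rw [← rpow_one_add' ht.1.le (by linarith [hα.2])]
    ring_nf
  rw [iteratedDeriv_two_entropyOfRoot ⟨ht.1, by linarith [ht.2]⟩, abs_div, abs_mul,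
    abs_of_nonneg (deriv_artanhSeries_nonneg hv₀ hv₁), abs_of_pos hlog2, hsplit]
  calc _ ≤ |(-8 : ℝ)| * (2 * (1 - (1 - 4 * t)))⁻¹ / log 2 * (t * t ^ (1 - α)) := by
        gcongr
        · exact mul_nonneg ht.1.le (rpow_nonneg ht.1.le _)
        · exact deriv_artanhSeries_le hv₀ hv₁
    _ = t ^ (1 - α) / log 2 := by
        rw [abs_of_neg (by norm_num)]
        field_simp [ht.1.ne']
        ring
    _ ≤ 2 * (1 + (1 - α)⁻¹) / log 2 := by
        gcongr
        have : 0 ≤ (1 - α)⁻¹ := inv_nonneg.2 (by linarith [hα.2])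
        linarith

lemma abs_iteratedDeriv_entropyOfRoot_mul_rpow_le (hα : α ∈ Ioo 0 1) (ht : t ∈ Ioc 0 (1 / 4))
    {k : ℕ} (hk : k ≤ 2) :
    |iteratedDeriv k entropyOfRoot t| * t ^ ((k : ℝ) - α) ≤ 2 * (1 + (1 - α)⁻¹) / log 2 := by
  interval_cases k
  · simpa using abs_entropyOfRoot_mul_rpow_le hα ht
  · simpa using abs_iteratedDeriv_one_entropyOfRoot_mul_rpow_le hα ht
  · simpa using abs_iteratedDeriv_two_entropyOfRoot_mul_rpow_le hα ht

end Bounds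

/-- For every `α ∈ (0,1)` the function `h₀` (extended by `0` outside
`[0,1/4]`) satisfies the derivative bounds
`max_{k≤2} sup_{t∈(0,1/4]} |h₀^{(k)}(t)| t^{k−α} < ∞`; in particular `h₀` satisfies
Condition 1 with exponent `α`. -/
theorem statement6 :
    ∀ h h0 : ℝ → ℝ,
      (∀ t, h t = -t * Real.logb 2 t - (1 - t) * Real.logb 2 (1 - t)) →
      (∀ t, h0 t = if t ∈ Set.Icc (0:ℝ) (1/4)
        then h ((1 - Real.sqrt (1 - 4 * t)) / 2) else 0) →
      ∀ α : ℝ, α ∈ Set.Ioo (0:ℝ) 1 →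
        (∃ C : ℝ, ∀ k : ℕ, k ≤ 2 → ∀ t ∈ Set.Ioc (0:ℝ) (1/4),
          |iteratedDerivWithin k h0 (Set.Ioc 0 (1/4)) t| * t ^ ((k : ℝ) - α) ≤ C) ∧
        Condition1 h0 α := by
  intro h h0 hh hh0 α hα
  have hEq : EqOn h0 entropyOfRoot (Ioc 0 (1 / 4)) := fun t ht => by
    rw [hh0, if_pos (Ioc_subset_Icc_self ht), hh, entropyOfRoot_eq ht,
      binEntropy_eq_negMulLog_add_negMulLog_one_sub, negMulLog, negMulLog, logb, logb, smallRoot]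
    ring
  have hbound : ∀ k : ℕ, k ≤ 2 → ∀ t ∈ Ioc (0 : ℝ) (1 / 4),
      |iteratedDerivWithin k h0 (Ioc 0 (1 / 4)) t| * t ^ ((k : ℝ) - α)
        ≤ 2 * (1 + (1 - α)⁻¹) / log 2 := fun k hk t ht => by
    rw [iteratedDerivWithin_eq_iteratedDeriv_entropyOfRoot hEq k ht]
    exact abs_iteratedDeriv_entropyOfRoot_mul_rpow_le hα ht hk
  refine ⟨⟨_, hbound⟩, ⟨hα.1, hα.2.le⟩, fun t ht => by rw [hh0, if_neg ht], ?_, _, hbound⟩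
  exact (contDiffOn_entropyOfRoot.mono fun t ht => ⟨ht.1, by linarith [ht.2]⟩).congr hEq

end
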